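/- Let c : [0,∞) → [0,1] be measurable, let τ : [0,∞) → [0,∞) be measurable and essentially bounded, and let g ∈ L¹([0,∞)) be nonnegative. Then there exists a unique family (v_t)_{t≥0} of nonnegative functions in L¹([0,∞)) such that for every t ≥ 0: v_t(a) = c(t−a)·∫₀^∞ v_{t−a}(s) τ(s) ds for Lebesgue-a.e. a ∈ [0,t), and v_t(a) = g(a−t) for Lebesgue-a.e. a ≥ t (uniqueness meaning equality in L¹([0,∞)) for every t). -/

import Mathlib

/-!
Along characteristics `v` is transported unchanged, so `v_t` is the shifted initial datum on
`[t, ∞)` and equals `c(t - a) b(t - a)` on `[0, t)`, where `b(s) = ∫ v_s τ` is the birth rate.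
Splitting `∫ v_s τ` into the initial population and the individuals born after time `0` shows
that `b` solves the Volterra equation `b(t) = G(t) + ∫_{(0,t]} c(u) b(u) τ(t - u) du` with
`G(t) = ∫ g(x) τ(x + t) dx`. Its kernel is bounded by `B = ess sup τ`, so the `n`-th term of the
Neumann series is at most `C (B t)ⁿ / n!` and the series converges to a solution, which defines
`v`. For two solutions, `‖v_t - v'_t‖₁ = ∫_{(0,t]} |w|`, where `w` is the thinned difference of
their birth rates, and `|w(u)| ≤ B ‖v_u - v'_u‖₁`; Gronwall's inequality forces `w = 0`.
-/

open MeasureTheory Set Filter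
open scoped Nat

/-- `v = (v_t)_{t ≥ 0}` is a (mild, method-of-characteristics) solution of the linear,
time-inhomogeneous McKendrick–von Foerster renewal equation with thinning function `c`,
birth intensity `τ` and initial condition `g`: each `v_t` is nonnegative and in
`L¹([0,∞))`, `v_t(a) = c(t-a)·∫₀^∞ v_{t-a}(s) τ(s) ds` for a.e. `a ∈ [0,t)`, and
`v_t(a) = g(a-t)` for a.e. `a ≥ t`. -/
def IsLinearRenewalSolution (τ c g : ℝ → ℝ) (v : ℝ → ℝ → ℝ) : Prop :=
  ∀ t ≥ (0 : ℝ),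
    Integrable (v t) (volume.restrict (Ici 0)) ∧
    (∀ᵐ a ∂(volume.restrict (Ici (0 : ℝ))), 0 ≤ v t a) ∧
    (∀ᵐ a ∂(volume.restrict (Ico (0 : ℝ) t)),
      v t a = c (t - a) * ∫ z in Ici (0 : ℝ), v (t - a) z * τ z) ∧
    (∀ᵐ a ∂(volume.restrict (Ici t)), v t a = g (a - t))

theorem MeasureTheory.MeasurePreserving.ae_restrict_comp {α β : Type*} [MeasurableSpace α]
    [MeasurableSpace β] {μ : Measure α} {ν : Measure β} {f : α → β}
    (hf : MeasurePreserving f μ ν) (he : MeasurableEmbedding f) {s : Set β} {t : Set α}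
    (hts : t ⊆ f ⁻¹' s) {p : β → Prop} (h : ∀ᵐ y ∂ν.restrict s, p y) :
    ∀ᵐ x ∂μ.restrict t, p (f x) :=
  ae_restrict_of_ae_restrict_of_subset hts
    ((hf.restrict_preimage_emb he s).quasiMeasurePreserving.ae h)

theorem MeasureTheory.Integrable.mul_of_nonneg_of_ae_le {α : Type*} [MeasurableSpace α]
    {μ : Measure α} {f τ : α → ℝ} {B : ℝ} (hf : Integrable f μ) (hτ : AEStronglyMeasurable τ μ)
    (hτ₀ : ∀ x, 0 ≤ τ x) (hτB : ∀ᵐ x ∂μ, τ x ≤ B) : Integrable (fun x => f x * τ x) μ :=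
  hf.mul_bdd hτ (hτB.mono fun x hx => by rwa [Real.norm_of_nonneg (hτ₀ x)])

theorem ae_restrict_Ici_comp_sub {p : ℝ → Prop} (t : ℝ)
    (h : ∀ᵐ x ∂volume.restrict (Ici 0), p x) : ∀ᵐ a ∂volume.restrict (Ici t), p (a - t) :=
  (measurePreserving_sub_right volume t).ae_restrict_comp (measurableEmbedding_subRight t)
    (by simp) h

theorem integrableOn_Ici_comp_sub {g : ℝ → ℝ} (hg : IntegrableOn g (Ici 0)) (t : ℝ) :
    IntegrableOn (fun a => g (a - t)) (Ici t) := by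
  simpa [Function.comp_def] using
    ((measurePreserving_sub_right volume t).integrableOn_comp_preimage
      (measurableEmbedding_subRight t)).2 hg

theorem setIntegral_Ico_comp_const_sub (F : ℝ → ℝ) (t : ℝ) :
    ∫ a in Ico 0 t, F (t - a) = ∫ u in Ioc 0 t, F u := by
  simpa using (Measure.measurePreserving_sub_left volume t).setIntegral_preimage_emb
    (measurableEmbedding_subLeft t) F (Ioc 0 t)

theorem integrableOn_Ico_comp_const_sub_iff {F : ℝ → ℝ} (t : ℝ) :
    IntegrableOn (fun a => F (t - a)) (Ico 0 t) ↔ IntegrableOn F (Ioc 0 t) := by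
  simpa [Function.comp_def] using
    (Measure.measurePreserving_sub_left volume t).integrableOn_comp_preimage
      (measurableEmbedding_subLeft t) (f := F) (s := Ioc 0 t)

theorem abs_integral_mul_sub_integral_mul_le {α : Type*} [MeasurableSpace α] {μ : Measure α}
    {f f' τ : α → ℝ} {B : ℝ} (hf : Integrable f μ) (hf' : Integrable f' μ)
    (hτ : AEStronglyMeasurable τ μ) (hτ₀ : ∀ x, 0 ≤ τ x) (hτB : ∀ᵐ x ∂μ, τ x ≤ B) :
    |∫ x, f x * τ x ∂μ - ∫ x, f' x * τ x ∂μ| ≤ B * ∫ x, |f x - f' x| ∂μ := by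
  have hfτ := hf.mul_of_nonneg_of_ae_le hτ hτ₀ hτB
  have hf'τ := hf'.mul_of_nonneg_of_ae_le hτ hτ₀ hτB
  rw [← integral_sub hfτ hf'τ, ← integral_const_mul]
  refine abs_integral_le_integral_abs.trans
    (integral_mono_ae (hfτ.sub hf'τ).abs ((hf.sub hf').abs.const_mul B) ?_)
  filter_upwards [hτB] with x hx
  rw [← sub_mul, abs_mul, abs_of_nonneg (hτ₀ x), mul_comm]
  exact mul_le_mul_of_nonneg_right hx (abs_nonneg _)

theorem eq_zero_of_sub_le_mul_sub_mul {ψ : ℝ → ℝ} {K : ℝ} (hψ₀ : ψ 0 = 0)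
    (hψ : ∀ r, 0 ≤ r → 0 ≤ ψ r)
    (hstep : ∀ r r', 0 ≤ r → r ≤ r' → ψ r' - ψ r ≤ K * (r' - r) * ψ r') :
    ∀ r, 0 ≤ r → ψ r = 0 := by
  set δ : ℝ := (2 * (|K| + 1))⁻¹
  have hδ : 0 < δ := by positivity
  have hsmall : ∀ h, 0 ≤ h → h ≤ δ → K * h ≤ 1 / 2 := by
    intro h h0 hh
    calc K * h ≤ |K| * δ :=
          (mul_le_mul_of_nonneg_right (le_abs_self K) h0).trans
            (mul_le_mul_of_nonneg_left hh (abs_nonneg K))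
      _ ≤ 1 / 2 := by
          rw [← div_eq_mul_inv, div_le_iff₀ (by positivity)]
          linarith [abs_nonneg K]
  have hind : ∀ n : ℕ, ∀ r, 0 ≤ r → r ≤ n * δ → ψ r = 0 := by
    intro n
    induction n with
    | zero =>
      intro r hr hrn
      rw [le_antisymm (by simpa using hrn) hr, hψ₀]
    | succ n ih =>
      intro r hr hrn
      set r₀ := min r (n * δ)
      have hr₀ : 0 ≤ r₀ := le_min hr (by positivity)
      have hψr₀ : ψ r₀ = 0 := ih r₀ hr₀ (min_le_right _ _)
      have hgap : r - r₀ ≤ δ := by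
        rcases le_total r (n * δ) with h | h
        · simp [r₀, min_eq_left h, hδ.le]
        · push_cast at hrn
          simp only [r₀, min_eq_right h]
          linarith
      have hhalf : ψ r ≤ 1 / 2 * ψ r := by
        have := hstep r₀ r hr₀ (min_le_left _ _)
        rw [hψr₀, sub_zero] at this
        exact this.trans (mul_le_mul_of_nonneg_right
          (hsmall _ (sub_nonneg.2 (min_le_left _ _)) hgap) (hψ r hr))
      linarith [hψ r hr]
  intro r hr
  obtain ⟨n, hn⟩ := exists_nat_ge (r / δ)
  exact hind n r hr ((div_le_iff₀ hδ).1 hn)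

theorem setIntegral_Ioc_eq_zero_of_le_mul_setIntegral {f : ℝ → ℝ} {K : ℝ} (hK : 0 ≤ K)
    (hf : ∀ r, 0 ≤ r → IntegrableOn f (Ioc 0 r)) (hf₀ : ∀ u, 0 ≤ f u)
    (hle : ∀ u, 0 ≤ u → f u ≤ K * ∫ x in Ioc 0 u, f x) :
    ∀ r, 0 ≤ r → ∫ x in Ioc 0 r, f x = 0 := by
  set ψ : ℝ → ℝ := fun r => ∫ x in Ioc 0 r, f x
  have hψ : ∀ r, 0 ≤ ψ r := fun r => setIntegral_nonneg measurableSet_Ioc fun u _ => hf₀ u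
  have hmono : ∀ r r', 0 ≤ r → r ≤ r' → ψ r ≤ ψ r' := fun r r' hr hrr' =>
    setIntegral_mono_set (hf r' (hr.trans hrr')) (Eventually.of_forall hf₀)
      (Ioc_subset_Ioc_right hrr').eventuallyLE
  refine eq_zero_of_sub_le_mul_sub_mul (K := K) (by simp) (fun r _ => hψ r) ?_
  intro r r' hr hrr'
  have hsplit : ψ r' - ψ r = ∫ x in Ioc r r', f x := by
    simp only [ψ]
    rw [← Ioc_union_Ioc_eq_Ioc hr hrr', setIntegral_union (Ioc_disjoint_Ioc_of_le le_rfl)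
      measurableSet_Ioc (hf r hr) ((hf r' (hr.trans hrr')).mono_set (Ioc_subset_Ioc_left hr))]
    ring
  calc ψ r' - ψ r = ∫ x in Ioc r r', f x := hsplit
    _ ≤ ∫ _ in Ioc r r', K * ψ r' :=
        setIntegral_mono_on ((hf r' (hr.trans hrr')).mono_set (Ioc_subset_Ioc_left hr))
          (integrableOn_const measure_Ioc_lt_top.ne) measurableSet_Ioc fun u hu =>
            (hle u (hr.trans hu.1.le)).trans
              (mul_le_mul_of_nonneg_left (hmono u r' (hr.trans hu.1.le) hu.2) hK)
    _ = K * (r' - r) * ψ r' := by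
        rw [setIntegral_const, Real.volume_real_Ioc_of_le hrr', smul_eq_mul]; ring

noncomputable def neumannTerm (G : ℝ → ℝ) (k : ℝ → ℝ → ℝ) : ℕ → ℝ → ℝ
  | 0 => G
  | n + 1 => fun t => ∫ u in Ioc 0 t, k t u * neumannTerm G k n u

noncomputable def volterraSolution (G : ℝ → ℝ) (k : ℝ → ℝ → ℝ) (t : ℝ) : ℝ :=
  ∑' n, neumannTerm G k n t

section Volterra

variable {G : ℝ → ℝ} {k : ℝ → ℝ → ℝ} {B C : ℝ}

theorem neumannTerm_nonneg (hG₀ : ∀ t, 0 ≤ G t) (hk₀ : ∀ t u, 0 ≤ k t u) :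
    ∀ n t, 0 ≤ neumannTerm G k n t
  | 0, t => hG₀ t
  | n + 1, _ => integral_nonneg fun u => mul_nonneg (hk₀ _ _) (neumannTerm_nonneg hG₀ hk₀ n u)

theorem neumannTerm_succ_of_nonpos (n : ℕ) {t : ℝ} (ht : t ≤ 0) :
    neumannTerm G k (n + 1) t = 0 := by
  simp [neumannTerm, Ioc_eq_empty_of_le ht]

theorem measurable_neumannTerm (hG : Measurable G) (hk : Measurable (Function.uncurry k)) :
    ∀ n, Measurable (neumannTerm G k n)
  | 0 => hG
  | n + 1 => by
    have hS : MeasurableSet {p : ℝ × ℝ | p.2 ∈ Ioc 0 p.1} :=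
      (measurableSet_lt measurable_const measurable_snd).inter
        (measurableSet_le measurable_snd measurable_fst)
    have hF : Measurable ({p : ℝ × ℝ | p.2 ∈ Ioc 0 p.1}.indicator
        fun p => k p.1 p.2 * neumannTerm G k n p.2) :=
      (hk.mul ((measurable_neumannTerm hG hk n).comp measurable_snd)).indicator hS
    have heq : neumannTerm G k (n + 1) = fun t => ∫ u,
        {p : ℝ × ℝ | p.2 ∈ Ioc 0 p.1}.indicator
          (fun p => k p.1 p.2 * neumannTerm G k n p.2) (t, u) := by
      funext t
      show ∫ u in Ioc 0 t, _ = _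
      rw [← integral_indicator measurableSet_Ioc]
      rfl
    rw [heq]
    exact hF.stronglyMeasurable.integral_prod_right'.measurable

theorem integrableOn_kernel_mul (hk : Measurable (Function.uncurry k)) (hk₀ : ∀ t u, 0 ≤ k t u)
    (hkB : ∀ t, ∀ᵐ u ∂volume.restrict (Ioc 0 t), k t u ≤ B) (hB : 0 ≤ B) {f : ℝ → ℝ}
    (hf : Measurable f) {t M : ℝ} (hfM : ∀ u ∈ Ioc 0 t, |f u| ≤ M) :
    IntegrableOn (fun u => k t u * f u) (Ioc 0 t) := by
  refine Measure.integrableOn_of_bounded (M := B * M) measure_Ioc_lt_top.ne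
    ((hk.comp measurable_prodMk_left).mul hf).aestronglyMeasurable ?_
  filter_upwards [hkB t, ae_restrict_mem measurableSet_Ioc] with u hku hu
  rw [Real.norm_eq_abs, abs_mul, abs_of_nonneg (hk₀ t u)]
  exact mul_le_mul hku (hfM u hu) (abs_nonneg _) hB

theorem volterraSolution_nonneg (hG₀ : ∀ t, 0 ≤ G t) (hk₀ : ∀ t u, 0 ≤ k t u) (t : ℝ) :
    0 ≤ volterraSolution G k t :=
  tsum_nonneg (neumannTerm_nonneg hG₀ hk₀ · t)

variable (hG : Measurable G) (hG₀ : ∀ t, 0 ≤ G t) (hGC : ∀ t, 0 ≤ t → G t ≤ C)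
  (hk : Measurable (Function.uncurry k)) (hk₀ : ∀ t u, 0 ≤ k t u)
  (hkB : ∀ t, ∀ᵐ u ∂volume.restrict (Ioc 0 t), k t u ≤ B) (hB : 0 ≤ B)

include hG hG₀ hGC hk hk₀ hkB hB

theorem neumannTerm_le : ∀ n t, 0 ≤ t → neumannTerm G k n t ≤ C * (B * t) ^ n / n !
  | 0, t, ht => by simpa [neumannTerm] using hGC t ht
  | n + 1, t, ht => by
    have hC : 0 ≤ C := (hG₀ 0).trans (hGC 0 le_rfl)
    have ih := neumannTerm_le n
    have hint : IntegrableOn (fun u => k t u * neumannTerm G k n u) (Ioc 0 t) :=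
      integrableOn_kernel_mul hk hk₀ hkB hB (measurable_neumannTerm hG hk n)
        (M := C * (B * t) ^ n / n !) fun u hu => by
        rw [abs_of_nonneg (neumannTerm_nonneg hG₀ hk₀ n u)]
        exact (ih u hu.1.le).trans (by gcongr; exacts [mul_nonneg hB hu.1.le, hu.2])
    calc neumannTerm G k (n + 1) t
        ≤ ∫ u in Ioc 0 t, C * B ^ (n + 1) / n ! * u ^ n := by
          refine integral_mono_ae hint
            (((continuous_pow n).integrableOn_Ioc (a := 0) (b := t)).const_mul _) ?_
          filter_upwards [hkB t, ae_restrict_mem measurableSet_Ioc] with u hku hu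
          calc k t u * neumannTerm G k n u ≤ B * (C * (B * u) ^ n / n !) :=
                mul_le_mul hku (ih u hu.1.le) (neumannTerm_nonneg hG₀ hk₀ n u) hB
            _ = C * B ^ (n + 1) / n ! * u ^ n := by ring
      _ = C * (B * t) ^ (n + 1) / (n + 1)! := by
          rw [integral_const_mul, ← intervalIntegral.integral_of_le ht, integral_pow,
            Nat.factorial_succ]
          push_cast
          field_simp
          ring

theorem summable_neumannTerm (t : ℝ) : Summable fun n => neumannTerm G k n t := by
  rcases le_or_gt 0 t with ht | ht
  · refine .of_nonneg_of_le (neumannTerm_nonneg hG₀ hk₀ · t) (fun n => ?_)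
      ((Real.summable_pow_div_factorial (B * t)).mul_left C)
    rw [← mul_div_assoc]
    exact neumannTerm_le hG hG₀ hGC hk hk₀ hkB hB n t ht
  · refine summable_of_ne_finset_zero (s := {0}) fun n hn => ?_
    obtain ⟨n, rfl⟩ := Nat.exists_eq_succ_of_ne_zero (by simpa using hn)
    exact neumannTerm_succ_of_nonpos n ht.le

theorem volterraSolution_le {t : ℝ} (ht : 0 ≤ t) :
    volterraSolution G k t ≤ C * Real.exp (B * t) := by
  rw [Real.exp_eq_exp_ℝ, NormedSpace.exp_eq_tsum_div, ← tsum_mul_left]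
  refine (summable_neumannTerm hG hG₀ hGC hk hk₀ hkB hB t).tsum_le_tsum (fun n => ?_)
    ((Real.summable_pow_div_factorial (B * t)).mul_left C)
  rw [← mul_div_assoc]
  exact neumannTerm_le hG hG₀ hGC hk hk₀ hkB hB n t ht

theorem measurable_volterraSolution : Measurable (volterraSolution G k) :=
  measurable_of_tendsto_metrizable
    (fun _ => Finset.measurable_sum _ fun n _ => measurable_neumannTerm hG hk n)
    (tendsto_pi_nhds.2 fun t =>
      (summable_neumannTerm hG hG₀ hGC hk hk₀ hkB hB t).hasSum.tendsto_sum_nat)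

theorem volterraSolution_eq (t : ℝ) :
    volterraSolution G k t = G t + ∫ u in Ioc 0 t, k t u * volterraSolution G k u := by
  have hint : ∀ n, IntegrableOn (fun u => k t u * neumannTerm G k n u) (Ioc 0 t) := fun n =>
    integrableOn_kernel_mul hk hk₀ hkB hB (measurable_neumannTerm hG hk n)
      (M := C * Real.exp (B * t)) fun u hu => by
        have hC : 0 ≤ C := (hG₀ 0).trans (hGC 0 le_rfl)
        rw [abs_of_nonneg (neumannTerm_nonneg hG₀ hk₀ n u)]
        calc neumannTerm G k n u ≤ volterraSolution G k u :=
              (summable_neumannTerm hG hG₀ hGC hk hk₀ hkB hB u).le_tsum n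
                fun m _ => neumannTerm_nonneg hG₀ hk₀ m u
          _ ≤ C * Real.exp (B * u) := volterraSolution_le hG hG₀ hGC hk hk₀ hkB hB hu.1.le
          _ ≤ C * Real.exp (B * t) := by gcongr; exact hu.2
  have hnorm : ∀ n,
      ∫ u in Ioc 0 t, ‖k t u * neumannTerm G k n u‖ = neumannTerm G k (n + 1) t :=
    fun n => integral_congr_ae (Eventually.of_forall fun u =>
      Real.norm_of_nonneg (mul_nonneg (hk₀ t u) (neumannTerm_nonneg hG₀ hk₀ n u)))
  have hsum := summable_neumannTerm hG hG₀ hGC hk hk₀ hkB hB t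
  calc volterraSolution G k t = G t + ∑' n, neumannTerm G k (n + 1) t := hsum.tsum_eq_zero_add
    _ = G t + ∫ u in Ioc 0 t, ∑' n, k t u * neumannTerm G k n u := by
        rw [← integral_tsum_of_summable_integral_norm hint]
        · rfl
        · simpa only [hnorm] using (summable_nat_add_iff 1).2 hsum
    _ = G t + ∫ u in Ioc 0 t, k t u * volterraSolution G k u := by
        simp only [tsum_mul_left, volterraSolution]

end Volterra

noncomputable def renewalSource (τ g : ℝ → ℝ) (t : ℝ) : ℝ := ∫ x in Ici 0, g x * τ (x + t)

noncomputable def renewalKernel (c τ : ℝ → ℝ) (t u : ℝ) : ℝ := c u * τ (t - u)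

noncomputable def birthRate (c τ g : ℝ → ℝ) : ℝ → ℝ :=
  volterraSolution (renewalSource τ g) (renewalKernel c τ)

noncomputable def renewalSolution (c τ g : ℝ → ℝ) (t a : ℝ) : ℝ :=
  if a < t then c (t - a) * birthRate c τ g (t - a) else g (a - t)

section Renewal

variable {c τ g : ℝ → ℝ} {B : ℝ}

theorem measurable_renewalSource (hτ : Measurable τ) (hg : Measurable g) :
    Measurable (renewalSource τ g) :=
  ((hg.comp measurable_snd).mul (hτ.comp (measurable_snd.add measurable_fst))).stronglyMeasurable
    |>.integral_prod_right'.measurable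

theorem renewalSource_nonneg (hτ₀ : ∀ a, 0 ≤ τ a)
    (hg₀ : ∀ᵐ a ∂volume.restrict (Ici 0), 0 ≤ g a) (t : ℝ) : 0 ≤ renewalSource τ g t :=
  integral_nonneg_of_ae (hg₀.mono fun _ hx => mul_nonneg hx (hτ₀ _))

theorem renewalSource_le (hτ : Measurable τ) (hτ₀ : ∀ a, 0 ≤ τ a)
    (hτB : ∀ᵐ a ∂volume.restrict (Ici 0), τ a ≤ B) (hg : Integrable g (volume.restrict (Ici 0)))
    (hg₀ : ∀ᵐ a ∂volume.restrict (Ici 0), 0 ≤ g a) {t : ℝ} (ht : 0 ≤ t) :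
    renewalSource τ g t ≤ B * ∫ x in Ici 0, g x := by
  have hτB' : ∀ᵐ x ∂volume.restrict (Ici 0), τ (x + t) ≤ B :=
    (measurePreserving_add_right volume t).ae_restrict_comp (measurableEmbedding_addRight t)
      (fun x (hx : 0 ≤ x) => by simp; linarith) hτB
  rw [← integral_const_mul]
  refine integral_mono_ae (hg.mul_of_nonneg_of_ae_le
    (hτ.comp (measurable_add_const t)).aestronglyMeasurable (fun _ => hτ₀ _) hτB')
    (hg.const_mul B) ?_
  filter_upwards [hg₀, hτB'] with x hgx hτx
  rw [mul_comm B]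
  exact mul_le_mul_of_nonneg_left hτx hgx

theorem measurable_renewalKernel (hc : Measurable c) (hτ : Measurable τ) :
    Measurable (Function.uncurry (renewalKernel c τ)) :=
  (hc.comp measurable_snd).mul (hτ.comp (measurable_fst.sub measurable_snd))

theorem renewalKernel_nonneg (hc01 : ∀ t, c t ∈ Icc (0 : ℝ) 1) (hτ₀ : ∀ a, 0 ≤ τ a)
    (t u : ℝ) : 0 ≤ renewalKernel c τ t u :=
  mul_nonneg (hc01 u).1 (hτ₀ _)

theorem renewalKernel_le (hc01 : ∀ t, c t ∈ Icc (0 : ℝ) 1) (hτ₀ : ∀ a, 0 ≤ τ a)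
    (hτB : ∀ᵐ a ∂volume.restrict (Ici 0), τ a ≤ B) (t : ℝ) :
    ∀ᵐ u ∂volume.restrict (Ioc 0 t), renewalKernel c τ t u ≤ B := by
  have hτB' : ∀ᵐ u ∂volume.restrict (Ioc 0 t), τ (t - u) ≤ B :=
    (Measure.measurePreserving_sub_left volume t).ae_restrict_comp
      (measurableEmbedding_subLeft t) (fun u (hu : u ∈ Ioc 0 t) => by simpa using hu.2) hτB
  filter_upwards [hτB'] with u hu
  exact (mul_le_of_le_one_left (hτ₀ _) (hc01 u).2).trans hu

theorem renewalSolution_of_lt {t a : ℝ} (h : a < t) :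
    renewalSolution c τ g t a = c (t - a) * birthRate c τ g (t - a) := if_pos h

theorem renewalSolution_of_le {t a : ℝ} (h : t ≤ a) : renewalSolution c τ g t a = g (a - t) :=
  if_neg h.not_gt

theorem birthRate_nonneg (hc01 : ∀ t, c t ∈ Icc (0 : ℝ) 1) (hτ₀ : ∀ a, 0 ≤ τ a)
    (hg₀ : ∀ᵐ a ∂volume.restrict (Ici 0), 0 ≤ g a) (t : ℝ) : 0 ≤ birthRate c τ g t :=
  volterraSolution_nonneg (renewalSource_nonneg hτ₀ hg₀)
    (renewalKernel_nonneg hc01 hτ₀) t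

theorem integrableOn_renewalSolution_Ici (hgi : Integrable g (volume.restrict (Ici 0)))
    (s : ℝ) : IntegrableOn (renewalSolution c τ g s) (Ici s) :=
  (integrableOn_Ici_comp_sub hgi s).congr_fun (fun _ ha => (renewalSolution_of_le ha).symm)
    measurableSet_Ici

variable (hc : Measurable c) (hc01 : ∀ t, c t ∈ Icc (0 : ℝ) 1)
  (hτ : Measurable τ) (hτ₀ : ∀ a, 0 ≤ τ a) (hτB : ∀ᵐ a ∂volume.restrict (Ici 0), τ a ≤ B)
  (hB : 0 ≤ B) (hg : Measurable g) (hgi : Integrable g (volume.restrict (Ici 0)))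
  (hg₀ : ∀ᵐ a ∂volume.restrict (Ici 0), 0 ≤ g a)

include hc hc01 hτ hτ₀ hτB hB hg hgi hg₀

theorem measurable_birthRate : Measurable (birthRate c τ g) :=
  measurable_volterraSolution (measurable_renewalSource hτ hg)
    (renewalSource_nonneg hτ₀ hg₀) (fun _ => renewalSource_le hτ hτ₀ hτB hgi hg₀)
    (measurable_renewalKernel hc hτ) (renewalKernel_nonneg hc01 hτ₀)
    (renewalKernel_le hc01 hτ₀ hτB) hB

theorem birthRate_le {t : ℝ} (ht : 0 ≤ t) :
    birthRate c τ g t ≤ (B * ∫ x in Ici 0, g x) * Real.exp (B * t) :=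
  volterraSolution_le (measurable_renewalSource hτ hg)
    (renewalSource_nonneg hτ₀ hg₀) (fun _ => renewalSource_le hτ hτ₀ hτB hgi hg₀)
    (measurable_renewalKernel hc hτ) (renewalKernel_nonneg hc01 hτ₀)
    (renewalKernel_le hc01 hτ₀ hτB) hB ht

theorem birthRate_eq (t : ℝ) :
    birthRate c τ g t =
      renewalSource τ g t + ∫ u in Ioc 0 t, c u * birthRate c τ g u * τ (t - u) := by
  rw [birthRate, volterraSolution_eq (measurable_renewalSource hτ hg)
    (renewalSource_nonneg hτ₀ hg₀) (fun _ => renewalSource_le hτ hτ₀ hτB hgi hg₀)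
    (measurable_renewalKernel hc hτ) (renewalKernel_nonneg hc01 hτ₀)
    (renewalKernel_le hc01 hτ₀ hτB) hB t]
  simp only [renewalKernel, mul_right_comm]

theorem integrableOn_renewalSolution_Ico (s : ℝ) :
    IntegrableOn (renewalSolution c τ g s) (Ico 0 s) := by
  have hmeas : Measurable (renewalSolution c τ g s) :=
    Measurable.ite (measurableSet_lt measurable_id measurable_const)
      ((hc.comp (measurable_const_sub s)).mul
        ((measurable_birthRate hc hc01 hτ hτ₀ hτB hB hg hgi hg₀).comp (measurable_const_sub s)))
      (hg.comp (measurable_sub_const s))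
  refine Measure.integrableOn_of_bounded (M := (B * ∫ x in Ici 0, g x) * Real.exp (B * s))
    measure_Ico_lt_top.ne hmeas.aestronglyMeasurable ?_
  filter_upwards [ae_restrict_mem measurableSet_Ico] with a ha
  have hb₀ := birthRate_nonneg hc01 hτ₀ hg₀ (s - a)
  rw [renewalSolution_of_lt ha.2, Real.norm_of_nonneg (mul_nonneg (hc01 _).1 hb₀)]
  calc c (s - a) * birthRate c τ g (s - a) ≤ birthRate c τ g (s - a) :=
        mul_le_of_le_one_left hb₀ (hc01 _).2
    _ ≤ (B * ∫ x in Ici 0, g x) * Real.exp (B * (s - a)) :=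
        birthRate_le hc hc01 hτ hτ₀ hτB hB hg hgi hg₀ (by linarith [ha.2])
    _ ≤ (B * ∫ x in Ici 0, g x) * Real.exp (B * s) := by
        have : 0 ≤ B * ∫ x in Ici 0, g x := mul_nonneg hB (integral_nonneg_of_ae hg₀)
        gcongr
        linarith [ha.1]

theorem integral_renewalSolution_mul {s : ℝ} (hs : 0 ≤ s) :
    ∫ z in Ici 0, renewalSolution c τ g s z * τ z = birthRate c τ g s := by
  have hτB' : ∀ S ⊆ Ici 0, ∀ᵐ z ∂volume.restrict S, τ z ≤ B := fun S hS =>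
    ae_restrict_of_ae_restrict_of_subset hS hτB
  have hold : ∫ z in Ici s, renewalSolution c τ g s z * τ z = renewalSource τ g s := by
    rw [← (measurePreserving_add_right volume s).setIntegral_preimage_emb
      (measurableEmbedding_addRight s), preimage_add_const_Ici, sub_self]
    refine setIntegral_congr_fun measurableSet_Ici fun x (hx : 0 ≤ x) => ?_
    rw [renewalSolution_of_le (le_add_of_nonneg_left hx), add_sub_cancel_right]
  have hyoung : ∫ z in Ico 0 s, renewalSolution c τ g s z * τ z =
      ∫ u in Ioc 0 s, c u * birthRate c τ g u * τ (s - u) := by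
    rw [← setIntegral_Ico_comp_const_sub]
    refine setIntegral_congr_fun measurableSet_Ico fun z hz => ?_
    rw [renewalSolution_of_lt hz.2, sub_sub_cancel]
  rw [← Ico_union_Ici_eq_Ici hs, setIntegral_union
    ((Iio_disjoint_Ici le_rfl).mono_left Ico_subset_Iio_self) measurableSet_Ici
    ((integrableOn_renewalSolution_Ico hc hc01 hτ hτ₀ hτB hB hg hgi hg₀ s).mul_of_nonneg_of_ae_le
      hτ.aestronglyMeasurable hτ₀ (hτB' _ Ico_subset_Ici_self))
    ((integrableOn_renewalSolution_Ici hgi s).mul_of_nonneg_of_ae_le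
      hτ.aestronglyMeasurable hτ₀ (hτB' _ (Ici_subset_Ici.2 hs))),
    hyoung, hold, birthRate_eq hc hc01 hτ hτ₀ hτB hB hg hgi hg₀ s, add_comm]

theorem isLinearRenewalSolution_renewalSolution :
    IsLinearRenewalSolution τ c g (renewalSolution c τ g) := by
  intro t ht
  have hsplit : ∀ {p : ℝ → Prop}, (∀ᵐ a ∂volume.restrict (Ico 0 t), p a) →
      (∀ᵐ a ∂volume.restrict (Ici t), p a) → ∀ᵐ a ∂volume.restrict (Ici 0), p a :=
    fun h₁ h₂ => by rw [← Ico_union_Ici_eq_Ici ht, ae_restrict_union_iff]; exact ⟨h₁, h₂⟩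
  refine ⟨?_, hsplit ?_ ?_, ?_, ?_⟩
  · rw [← Ico_union_Ici_eq_Ici ht]
    exact (integrableOn_renewalSolution_Ico hc hc01 hτ hτ₀ hτB hB hg hgi hg₀ t).union
      (integrableOn_renewalSolution_Ici hgi t)
  · filter_upwards [ae_restrict_mem measurableSet_Ico] with a ha
    rw [renewalSolution_of_lt ha.2]
    exact mul_nonneg (hc01 _).1 (birthRate_nonneg hc01 hτ₀ hg₀ _)
  · filter_upwards [ae_restrict_mem measurableSet_Ici, ae_restrict_Ici_comp_sub t hg₀]
      with a ha hga
    rwa [renewalSolution_of_le ha]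
  · filter_upwards [ae_restrict_mem measurableSet_Ico] with a ha
    rw [integral_renewalSolution_mul hc hc01 hτ hτ₀ hτB hB hg hgi hg₀ (sub_nonneg.2 ha.2.le),
      renewalSolution_of_lt ha.2]
  · filter_upwards [ae_restrict_mem measurableSet_Ici] with a ha
    exact renewalSolution_of_le ha

end Renewal

theorem IsLinearRenewalSolution.of_ae_eq_initial {τ c g g' : ℝ → ℝ} {v : ℝ → ℝ → ℝ}
    (hgg' : g =ᵐ[volume.restrict (Ici 0)] g') (hv : IsLinearRenewalSolution τ c g' v) :
    IsLinearRenewalSolution τ c g v := by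
  intro t ht
  obtain ⟨hint, hnonneg, hyoung, hold⟩ := hv t ht
  refine ⟨hint, hnonneg, hyoung, ?_⟩
  filter_upwards [hold, ae_restrict_Ici_comp_sub t hgg'] with a ha hga
  rw [ha, hga]

noncomputable def birthRateGap (τ c : ℝ → ℝ) (v v' : ℝ → ℝ → ℝ) (u : ℝ) : ℝ :=
  c u * ((∫ z in Ici 0, v u z * τ z) - ∫ z in Ici 0, v' u z * τ z)

section Uniqueness

variable {τ c g : ℝ → ℝ} {v v' : ℝ → ℝ → ℝ}

theorem IsLinearRenewalSolution.sub_ae_eq_birthRateGap (hv : IsLinearRenewalSolution τ c g v)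
    (hv' : IsLinearRenewalSolution τ c g v') {t : ℝ} (ht : 0 ≤ t) :
    ∀ᵐ a ∂volume.restrict (Ico 0 t), v t a - v' t a = birthRateGap τ c v v' (t - a) := by
  filter_upwards [(hv t ht).2.2.1, (hv' t ht).2.2.1] with a h h'
  rw [h, h', ← mul_sub, birthRateGap]

theorem IsLinearRenewalSolution.integrableOn_birthRateGap (hv : IsLinearRenewalSolution τ c g v)
    (hv' : IsLinearRenewalSolution τ c g v') {t : ℝ} (ht : 0 ≤ t) :
    IntegrableOn (birthRateGap τ c v v') (Ioc 0 t) := by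
  have hdiff : IntegrableOn (fun a => v t a - v' t a) (Ici 0) := (hv t ht).1.sub (hv' t ht).1
  exact (integrableOn_Ico_comp_const_sub_iff t).1
    ((hdiff.mono_set Ico_subset_Ici_self).congr (hv.sub_ae_eq_birthRateGap hv' ht))

theorem IsLinearRenewalSolution.integral_abs_sub_eq (hv : IsLinearRenewalSolution τ c g v)
    (hv' : IsLinearRenewalSolution τ c g v') {t : ℝ} (ht : 0 ≤ t) :
    ∫ a in Ici 0, |v t a - v' t a| = ∫ u in Ioc 0 t, |birthRateGap τ c v v' u| := by
  have hdiff : IntegrableOn (fun a => v t a - v' t a) (Ici 0) := (hv t ht).1.sub (hv' t ht).1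
  have hold : ∀ᵐ a ∂volume.restrict (Ici t), |v t a - v' t a| = 0 := by
    filter_upwards [(hv t ht).2.2.2, (hv' t ht).2.2.2] with a h h'
    rw [h, h', sub_self, abs_zero]
  rw [← Ico_union_Ici_eq_Ici ht, setIntegral_union
    ((Iio_disjoint_Ici le_rfl).mono_left Ico_subset_Iio_self) measurableSet_Ici
    (hdiff.mono_set Ico_subset_Ici_self).abs (hdiff.mono_set (Ici_subset_Ici.2 ht)).abs,
    integral_eq_zero_of_ae hold, add_zero, ← setIntegral_Ico_comp_const_sub]
  exact integral_congr_ae ((hv.sub_ae_eq_birthRateGap hv' ht).mono fun a ha => by simp only [ha])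

theorem IsLinearRenewalSolution.ae_eq {B : ℝ} (hc01 : ∀ t, c t ∈ Icc (0 : ℝ) 1)
    (hτ : Measurable τ) (hτ₀ : ∀ a, 0 ≤ τ a) (hτB : ∀ᵐ a ∂volume.restrict (Ici 0), τ a ≤ B)
    (hB : 0 ≤ B) (hv : IsLinearRenewalSolution τ c g v) (hv' : IsLinearRenewalSolution τ c g v') :
    ∀ t ≥ (0 : ℝ), v t =ᵐ[volume.restrict (Ici 0)] v' t := by
  have hgap_le : ∀ u ≥ (0 : ℝ),
      |birthRateGap τ c v v' u| ≤ B * ∫ x in Ioc 0 u, |birthRateGap τ c v v' x| := by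
    intro u hu
    rw [← hv.integral_abs_sub_eq hv' hu, birthRateGap, abs_mul, abs_of_nonneg (hc01 u).1]
    exact (mul_le_of_le_one_left (abs_nonneg _) (hc01 u).2).trans
      (abs_integral_mul_sub_integral_mul_le (hv u hu).1 (hv' u hu).1 hτ.aestronglyMeasurable
        hτ₀ hτB)
  intro t ht
  have hzero : ∫ a in Ici 0, |v t a - v' t a| = 0 :=
    (hv.integral_abs_sub_eq hv' ht).trans (setIntegral_Ioc_eq_zero_of_le_mul_setIntegral hB
      (fun r hr => (hv.integrableOn_birthRateGap hv' hr).abs) (fun _ => abs_nonneg _) hgap_le t ht)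
  filter_upwards [(integral_eq_zero_iff_of_nonneg (fun _ => abs_nonneg _)
    ((hv t ht).1.sub (hv' t ht).1).abs).1 hzero] with a ha
  exact sub_eq_zero.1 (abs_eq_zero.1 ha)

end Uniqueness

/-- Well-posedness of the linear, time-inhomogeneous renewal equation:
if `c : [0,∞) → [0,1]` is measurable, `τ : [0,∞) → [0,∞)` is measurable and essentially
bounded, and `g ∈ L¹([0,∞))` is nonnegative, then there exists a family `(v_t)_{t ≥ 0}`
of nonnegative `L¹` functions solving the equation, and it is unique up to a.e. equality
for every `t ≥ 0`. -/
theorem exists_unique_linear_renewal_solution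
    (c : ℝ → ℝ) (hcmeas : Measurable c) (hc01 : ∀ t, c t ∈ Icc (0 : ℝ) 1)
    (τ : ℝ → ℝ) (hτmeas : Measurable τ) (hτnonneg : ∀ a, 0 ≤ τ a)
    (hτbdd : ∃ B : ℝ, ∀ᵐ a ∂(volume.restrict (Ici (0 : ℝ))), τ a ≤ B)
    (g : ℝ → ℝ) (hg : Integrable g (volume.restrict (Ici 0)))
    (hgnonneg : ∀ᵐ a ∂(volume.restrict (Ici (0 : ℝ))), 0 ≤ g a) :
    (∃ v : ℝ → ℝ → ℝ, IsLinearRenewalSolution τ c g v) ∧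
      ∀ v v' : ℝ → ℝ → ℝ, IsLinearRenewalSolution τ c g v →
        IsLinearRenewalSolution τ c g v' →
        ∀ t ≥ (0 : ℝ), v t =ᵐ[volume.restrict (Ici (0 : ℝ))] v' t := by
  obtain ⟨B₀, hB₀⟩ := hτbdd
  have hτB : ∀ᵐ a ∂volume.restrict (Ici 0), τ a ≤ max B₀ 0 :=
    hB₀.mono fun _ ha => ha.trans (le_max_left _ _)
  have hB : 0 ≤ max B₀ 0 := le_max_right _ _
  refine ⟨?_, fun v v' hv hv' => hv.ae_eq hc01 hτmeas hτnonneg hτB hB hv'⟩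
  set g₁ := hg.1.mk g
  have hgg₁ : g =ᵐ[volume.restrict (Ici 0)] g₁ := hg.1.ae_eq_mk
  have hg₁nonneg : ∀ᵐ a ∂volume.restrict (Ici 0), 0 ≤ g₁ a := by
    filter_upwards [hgnonneg, hgg₁] with a ha hga
    rwa [← hga]
  exact ⟨renewalSolution c τ g₁, .of_ae_eq_initial hgg₁
    (isLinearRenewalSolution_renewalSolution hcmeas hc01 hτmeas hτnonneg hτB hB
      hg.1.stronglyMeasurable_mk.measurable (hg.congr hgg₁) hg₁nonneg)⟩
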